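/- Let d ≥ 2, k > 0, f ∈ L²_loc(ℝ^d), and let n : ℝ^d → ℝ be bounded measurable. For R > 0 let D_R be the set of weak H¹ solutions of Δu + k² n² u = f in B_R, let d_R = inf { [u]_R : u ∈ D_R }, and let u_{B_R} be a minimizer of [·]_R over D_R. Then for any ρ > R > 0, [ u_{B_R} − u_{B_ρ} ]_R² ≤ 2 ( d_ρ² − d_R² ). -/

import Mathlib

open MeasureTheory Metric Complex Set
open scoped MeasureTheory ENNReal NNReal ComplexConjugate

noncomputable section

/-- Euclidean space `ℝ^d`. -/
abbrev Euc (d : ℕ) := EuclideanSpace ℝ (Fin d)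

/-- The `j`-th standard basis vector of `ℝ^d`. -/
def basisE (d : ℕ) (j : Fin d) : Euc d := EuclideanSpace.single j (1 : ℝ)

/-- The `j`-th partial derivative `∂_j u (x)` of a complex-valued function. -/
def pderiv' (d : ℕ) (u : Euc d → ℂ) (x : Euc d) (j : Fin d) : ℂ :=
  fderiv ℝ u x (basisE d j)

/-- The radial derivative `∂u/∂r (x) = ∇u(x) ⋅ x/|x|`. -/
def radialDeriv (d : ℕ) (u : Euc d → ℂ) (x : Euc d) : ℂ :=
  fderiv ℝ u x ((‖x‖⁻¹ : ℝ) • x)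

/-- The Laplacian `Δu = ∑_j ∂²_j u`. -/
def laplacian' (d : ℕ) (u : Euc d → ℂ) (x : Euc d) : ℂ :=
  ∑ j : Fin d, fderiv ℝ (fun y => fderiv ℝ u y (basisE d j)) x (basisE d j)

/-- The integrand `|∇u(x) − i k n(x) u(x) x/|x||² / (1+|x|)` of the radiation seminorm,
where the gradient is given by the (possibly distributional) datum `Du`. -/
def radIntegrand (d : ℕ) (k : ℝ) (n : Euc d → ℝ) (u : Euc d → ℂ)
    (Du : Euc d → Fin d → ℂ) (x : Euc d) : ℝ :=
  (∑ j : Fin d, ‖Du x j - Complex.I * (k : ℂ) * (n x : ℂ) * u x * ((x j / ‖x‖ : ℝ) : ℂ)‖ ^ 2) /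
    (1 + ‖x‖)

/-- The square `[u]²` of the radiation seminorm on a set `Ω`. -/
def radNormSq (d : ℕ) (k : ℝ) (n : Euc d → ℝ) (Ω : Set (Euc d)) (u : Euc d → ℂ)
    (Du : Euc d → Fin d → ℂ) : ℝ :=
  ∫ x in Ω, radIntegrand d k n u Du x

/-- The surface integral `∫_{∂B_ρ} F dσ` over the sphere of radius `ρ` centered at the origin,
with respect to the `(d−1)`-dimensional Hausdorff (surface) measure. -/
def sphereIntegral (d : ℕ) (ρ : ℝ) (F : Euc d → ℂ) : ℂ :=
  ∫ x in sphere (0 : Euc d) ρ, F x ∂(μH[(d : ℝ) - 1])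

/-- The spherical average `n_♯(r)` of `n` over the sphere `∂B_r`. -/
def nSharp (d : ℕ) (n : Euc d → ℝ) (r : ℝ) : ℝ :=
  ⨍ x in sphere (0 : Euc d) r, n x ∂(μH[(d : ℝ) - 1])

/-- `u ∈ H¹(Ω)` with distributional gradient `Du`: both are square integrable on `Ω` and `Du`
is the weak gradient of `u`, i.e. `∫ u ∂_jφ = −∫ (Du)_j φ` for all test functions `φ ∈ C¹_c(Ω)`. -/
def MemH1 (d : ℕ) (Ω : Set (Euc d)) (u : Euc d → ℂ) (Du : Euc d → Fin d → ℂ) : Prop :=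
  MemLp u 2 (volume.restrict Ω) ∧ MemLp Du 2 (volume.restrict Ω) ∧
    ∀ φ : Euc d → ℂ, ContDiff ℝ 1 φ → HasCompactSupport φ → tsupport φ ⊆ Ω →
      ∀ j : Fin d,
        ∫ x in Ω, u x * fderiv ℝ φ x (basisE d j) = - ∫ x in Ω, Du x j * φ x

/-- `(u, Du)` is a weak (variational) solution of `Δu + k² n² u = f` in `Ω`:
`−∫ ∇u ⋅ conj ∇φ + k² ∫ n² u conj φ = ∫ f conj φ` for all test functions `φ ∈ C¹_c(Ω)`. -/
def IsHelmSol (d : ℕ) (k : ℝ) (n : Euc d → ℝ) (f : Euc d → ℂ) (Ω : Set (Euc d))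
    (u : Euc d → ℂ) (Du : Euc d → Fin d → ℂ) : Prop :=
  ∀ φ : Euc d → ℂ, ContDiff ℝ 1 φ → HasCompactSupport φ → tsupport φ ⊆ Ω →
    (- ∫ x in Ω, ∑ j : Fin d, Du x j * conj (fderiv ℝ φ x (basisE d j)))
        + (k : ℂ) ^ 2 * ∫ x in Ω, ((n x : ℝ) : ℂ) ^ 2 * u x * conj (φ x)
      = ∫ x in Ω, f x * conj (φ x)

/-- The infimum `d_R = inf { [u]_R : u ∈ D_R }` of the radiation seminorm over the set `D_R` of
weak `H¹` solutions of the Helmholtz equation in the ball `B_R`. -/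
def helmInf (d : ℕ) (k : ℝ) (n : Euc d → ℝ) (f : Euc d → ℂ) (R : ℝ) : ℝ :=
  sInf {s : ℝ | ∃ u Du, MemH1 d (ball (0 : Euc d) R) u Du ∧
    IsHelmSol d k n f (ball (0 : Euc d) R) u Du ∧
    s = Real.sqrt (radNormSq d k n (ball (0 : Euc d) R) u Du)}

/-! Both `(u_{B_R} + u_{B_ρ})/2` and `u_{B_ρ}` (restricted to `B_R`) lie in the convex set `D_R`, so
minimality gives `[(u_{B_R} + u_{B_ρ})/2]_R ≥ d_R`, while `[u_{B_ρ}]_R ≤ [u_{B_ρ}]_ρ = d_ρ`. Since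
`[·]_R²` is the integral of a pointwise quadratic form, it obeys the parallelogram identity, and
`[u_{B_R} − u_{B_ρ}]_R² = 2 [u_{B_R}]_R² + 2 [u_{B_ρ}]_R² − 4 [(u_{B_R} + u_{B_ρ})/2]_R²
  ≤ 2 d_R² + 2 d_ρ² − 4 d_R²`. -/

theorem MeasureTheory.setIntegral_eq_of_subset_of_forall_notMem_eq_zero {α E : Type*}
    [MeasurableSpace α] [NormedAddCommGroup E] [NormedSpace ℝ E] {μ : Measure α} {s t : Set α}
    {F : α → E} (hst : s ⊆ t) (hF : ∀ x ∉ s, F x = 0) :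
    ∫ x in t, F x ∂μ = ∫ x in s, F x ∂μ := by
  rw [setIntegral_eq_integral_of_forall_compl_eq_zero hF,
    setIntegral_eq_integral_of_forall_compl_eq_zero fun x hx => hF x fun hs => hx (hst hs)]

section RadiationSeminorm

variable {d : ℕ} {k : ℝ} {n : Euc d → ℝ} {Ω Ω' : Set (Euc d)} {u v : Euc d → ℂ}
  {Du Dv : Euc d → Fin d → ℂ} {C : ℝ}

def radTerm (d : ℕ) (k : ℝ) (n : Euc d → ℝ) (u : Euc d → ℂ) (Du : Euc d → Fin d → ℂ)
    (j : Fin d) (x : Euc d) : ℂ :=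
  Du x j - Complex.I * (k : ℂ) * (n x : ℂ) * u x * ((x j / ‖x‖ : ℝ) : ℂ)

theorem radIntegrand_eq (x : Euc d) :
    radIntegrand d k n u Du x = (∑ j, ‖radTerm d k n u Du j x‖ ^ 2) / (1 + ‖x‖) :=
  rfl

theorem radIntegrand_nonneg (x : Euc d) : 0 ≤ radIntegrand d k n u Du x :=
  div_nonneg (Finset.sum_nonneg fun _ _ => by positivity) (by positivity)

theorem radNormSq_nonneg : 0 ≤ radNormSq d k n Ω u Du :=
  integral_nonneg radIntegrand_nonneg

theorem abs_coord_div_norm_le_one (x : Euc d) (j : Fin d) : |x j / ‖x‖| ≤ 1 := by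
  rw [abs_div, abs_norm]
  exact div_le_one_of_le₀ ((Real.norm_eq_abs _).symm.trans_le (PiLp.norm_apply_le x j))
    (norm_nonneg x)

theorem memLp_radTerm (hn : Measurable n) (hC : ∀ x, |n x| ≤ C)
    (hu : MemLp u 2 (volume.restrict Ω)) (hDu : MemLp Du 2 (volume.restrict Ω)) (j : Fin d) :
    MemLp (radTerm d k n u Du j) 2 (volume.restrict Ω) := by
  have hmeas : AEStronglyMeasurable
      (fun x => Complex.I * (k : ℂ) * (n x : ℂ) * u x * ((x j / ‖x‖ : ℝ) : ℂ))
      (volume.restrict Ω) := by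
    have hg : Measurable fun x : Euc d => Complex.I * k * (n x : ℂ) * ((x j / ‖x‖ : ℝ) : ℂ) :=
      (measurable_const.mul (Complex.measurable_ofReal.comp hn)).mul
        (Complex.measurable_ofReal.comp (by fun_prop))
    exact (hg.aestronglyMeasurable.mul hu.1).congr
      (Filter.Eventually.of_forall fun x => by simp only [Pi.mul_apply]; ring)
  refine (hDu.eval j).sub
    (hu.of_le_mul (c := |k| * C) hmeas (Filter.Eventually.of_forall fun x => ?_))
  calc ‖Complex.I * (k : ℂ) * (n x : ℂ) * u x * ((x j / ‖x‖ : ℝ) : ℂ)‖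
      = |k| * |n x| * ‖u x‖ * |x j / ‖x‖| := by
        simp only [norm_mul, Complex.norm_I, Complex.norm_real, Real.norm_eq_abs, one_mul]
    _ ≤ |k| * |n x| * ‖u x‖ * 1 := by gcongr; exact abs_coord_div_norm_le_one x j
    _ ≤ |k| * C * ‖u x‖ := by rw [mul_one]; gcongr; exact hC x

theorem integrableOn_radIntegrand (hn : Measurable n) (hC : ∀ x, |n x| ≤ C)
    (hu : MemLp u 2 (volume.restrict Ω)) (hDu : MemLp Du 2 (volume.restrict Ω)) :
    IntegrableOn (radIntegrand d k n u Du) Ω := by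
  have hsum : Integrable (fun x => ∑ j, ‖radTerm d k n u Du j x‖ ^ 2) (volume.restrict Ω) :=
    integrable_finsetSum _ fun j _ => (memLp_radTerm hn hC hu hDu j).norm.integrable_sq
  refine hsum.mono' ?_ (Filter.Eventually.of_forall fun x => ?_)
  · exact (hsum.1.aemeasurable.div (by fun_prop)).aestronglyMeasurable
  · rw [Real.norm_eq_abs, abs_of_nonneg (radIntegrand_nonneg x), radIntegrand_eq]
    exact div_le_self (by positivity) (le_add_of_nonneg_right (norm_nonneg x))

theorem radIntegrand_sub (x : Euc d) :
    radIntegrand d k n (u - v) (Du - Dv) x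
      = 2 * radIntegrand d k n u Du x + 2 * radIntegrand d k n v Dv x
        - 4 * radIntegrand d k n ((2 : ℂ)⁻¹ • u + (2 : ℂ)⁻¹ • v)
          ((2 : ℂ)⁻¹ • Du + (2 : ℂ)⁻¹ • Dv) x := by
  have hterm : ∀ j, ‖radTerm d k n (u - v) (Du - Dv) j x‖ ^ 2
      = 2 * ‖radTerm d k n u Du j x‖ ^ 2 + 2 * ‖radTerm d k n v Dv j x‖ ^ 2
        - 4 * ‖radTerm d k n ((2 : ℂ)⁻¹ • u + (2 : ℂ)⁻¹ • v)
          ((2 : ℂ)⁻¹ • Du + (2 : ℂ)⁻¹ • Dv) j x‖ ^ 2 := by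
    intro j
    set a := radTerm d k n u Du j x
    set b := radTerm d k n v Dv j x
    have hsub : radTerm d k n (u - v) (Du - Dv) j x = a - b := by
      simp only [a, b, radTerm, Pi.sub_apply]; ring
    have hmid : radTerm d k n ((2 : ℂ)⁻¹ • u + (2 : ℂ)⁻¹ • v)
        ((2 : ℂ)⁻¹ • Du + (2 : ℂ)⁻¹ • Dv) j x = (2 : ℂ)⁻¹ • (a + b) := by
      simp only [a, b, radTerm, Pi.add_apply, Pi.smul_apply, smul_eq_mul]; ring
    rw [hsub, hmid, norm_smul, mul_pow, norm_inv, Complex.norm_ofNat]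
    linarith [parallelogram_law_with_norm ℂ a b]
  simp only [radIntegrand_eq, hterm, Finset.sum_sub_distrib, Finset.sum_add_distrib,
    ← Finset.mul_sum]
  ring

theorem radNormSq_sub (hn : Measurable n) (hC : ∀ x, |n x| ≤ C)
    (hu : MemLp u 2 (volume.restrict Ω)) (hDu : MemLp Du 2 (volume.restrict Ω))
    (hv : MemLp v 2 (volume.restrict Ω)) (hDv : MemLp Dv 2 (volume.restrict Ω)) :
    radNormSq d k n Ω (u - v) (Du - Dv)
      = 2 * radNormSq d k n Ω u Du + 2 * radNormSq d k n Ω v Dv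
        - 4 * radNormSq d k n Ω ((2 : ℂ)⁻¹ • u + (2 : ℂ)⁻¹ • v)
          ((2 : ℂ)⁻¹ • Du + (2 : ℂ)⁻¹ • Dv) := by
  have hmid := integrableOn_radIntegrand (k := k) hn hC
    ((hu.const_smul (2 : ℂ)⁻¹).add (hv.const_smul (2 : ℂ)⁻¹))
    ((hDu.const_smul (2 : ℂ)⁻¹).add (hDv.const_smul (2 : ℂ)⁻¹))
  have hu' := integrableOn_radIntegrand (k := k) hn hC hu hDu
  have hv' := integrableOn_radIntegrand (k := k) hn hC hv hDv
  have hsum : IntegrableOn (fun x => 2 * radIntegrand d k n u Du x + 2 * radIntegrand d k n v Dv x)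
      Ω := (hu'.const_mul 2).add (hv'.const_mul 2)
  simp only [radNormSq, funext radIntegrand_sub]
  rw [integral_sub hsum (hmid.const_mul 4),
    integral_add (hu'.const_mul 2) (hv'.const_mul 2), integral_const_mul, integral_const_mul,
    integral_const_mul]

theorem radNormSq_mono_set (hΩ : Ω ⊆ Ω') (hn : Measurable n) (hC : ∀ x, |n x| ≤ C)
    (hu : MemLp u 2 (volume.restrict Ω')) (hDu : MemLp Du 2 (volume.restrict Ω')) :
    radNormSq d k n Ω u Du ≤ radNormSq d k n Ω' u Du :=
  setIntegral_mono_set (integrableOn_radIntegrand hn hC hu hDu)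
    (Filter.Eventually.of_forall radIntegrand_nonneg) hΩ.eventuallyLE

end RadiationSeminorm

theorem MeasureTheory.integral_mul_add_mul {α 𝕜 : Type*} [MeasurableSpace α] [RCLike 𝕜]
    {μ : Measure α} {F G : α → 𝕜} (hF : Integrable F μ) (hG : Integrable G μ) (a b : 𝕜) :
    ∫ x, (a * F x + b * G x) ∂μ = a * ∫ x, F x ∂μ + b * ∫ x, G x ∂μ := by
  rw [integral_add (hF.const_mul a) (hG.const_mul b), integral_const_mul, integral_const_mul]

theorem ContDiff.memLp_fderiv_apply {E : Type*} [NormedAddCommGroup E] [NormedSpace ℝ E]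
    [MeasurableSpace E] [OpensMeasurableSpace E] {μ : Measure E} [IsFiniteMeasureOnCompacts μ]
    {p : ℝ≥0∞} {φ : E → ℂ} (hφ : ContDiff ℝ 1 φ) (hφc : HasCompactSupport φ) (v : E) :
    MemLp (fun x => fderiv ℝ φ x v) p μ :=
  ((hφ.continuous_fderiv one_ne_zero).clm_apply continuous_const).memLp_of_hasCompactSupport
    (hφc.fderiv_apply ℝ v)

theorem MeasureTheory.MemLp.ofReal_sq_mul {α : Type*} [MeasurableSpace α] {μ : Measure α}
    {p : ℝ≥0∞} {g : α → ℂ} (hg : MemLp g p μ) {n : α → ℝ} (hn : Measurable n) {C : ℝ}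
    (hC : ∀ x, |n x| ≤ C) : MemLp (fun x => ((n x : ℝ) : ℂ) ^ 2 * g x) p μ := by
  refine hg.of_le_mul (c := C ^ 2)
    (((Complex.measurable_ofReal.comp hn).pow_const 2).aestronglyMeasurable.mul hg.1)
    (Filter.Eventually.of_forall fun x => ?_)
  rw [norm_mul, norm_pow, Complex.norm_real, Real.norm_eq_abs]
  gcongr
  exact hC x

section SolutionSet

variable {d : ℕ} {k : ℝ} {n : Euc d → ℝ} {f : Euc d → ℂ} {Ω Ω' : Set (Euc d)}
  {u v : Euc d → ℂ} {Du Dv : Euc d → Fin d → ℂ}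

theorem MemH1.mono (h : MemH1 d Ω' u Du) (hΩ : Ω ⊆ Ω') : MemH1 d Ω u Du := by
  obtain ⟨hu, hDu, hweak⟩ := h
  refine ⟨hu.mono_measure (Measure.restrict_mono hΩ le_rfl),
    hDu.mono_measure (Measure.restrict_mono hΩ le_rfl), fun φ hφ hφc hφΩ j => ?_⟩
  have hoff : ∀ x ∉ Ω, x ∉ tsupport φ := fun x hx hφx => hx (hφΩ hφx)
  rw [← setIntegral_eq_of_subset_of_forall_notMem_eq_zero hΩ fun x hx => by
      simp [fderiv_of_notMem_tsupport ℝ (hoff x hx)],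
    ← setIntegral_eq_of_subset_of_forall_notMem_eq_zero hΩ fun x hx => by
      simp [image_eq_zero_of_notMem_tsupport (hoff x hx)]]
  exact hweak φ hφ hφc (hφΩ.trans hΩ) j

theorem IsHelmSol.mono (h : IsHelmSol d k n f Ω' u Du) (hΩ : Ω ⊆ Ω') :
    IsHelmSol d k n f Ω u Du := by
  intro φ hφ hφc hφΩ
  have hoff : ∀ x ∉ Ω, x ∉ tsupport φ := fun x hx hφx => hx (hφΩ hφx)
  rw [← setIntegral_eq_of_subset_of_forall_notMem_eq_zero hΩ fun x hx => by
      simp [fderiv_of_notMem_tsupport ℝ (hoff x hx)],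
    ← setIntegral_eq_of_subset_of_forall_notMem_eq_zero hΩ fun x hx => by
      simp [image_eq_zero_of_notMem_tsupport (hoff x hx)],
    ← setIntegral_eq_of_subset_of_forall_notMem_eq_zero hΩ fun x hx => by
      simp [image_eq_zero_of_notMem_tsupport (hoff x hx)]]
  exact h φ hφ hφc (hφΩ.trans hΩ)

theorem MemH1.smul_add_smul (hu : MemH1 d Ω u Du) (hv : MemH1 d Ω v Dv) (a b : ℂ) :
    MemH1 d Ω (a • u + b • v) (a • Du + b • Dv) := by
  obtain ⟨hu, hDu, hweak_u⟩ := hu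
  obtain ⟨hv, hDv, hweak_v⟩ := hv
  refine ⟨(hu.const_smul a).add (hv.const_smul b), (hDu.const_smul a).add (hDv.const_smul b),
    fun φ hφ hφc hφΩ j => ?_⟩
  have hφ2 : MemLp φ 2 (volume.restrict Ω) := hφ.continuous.memLp_of_hasCompactSupport hφc
  have hdφ2 : MemLp (fun x => fderiv ℝ φ x (basisE d j)) 2 (volume.restrict Ω) :=
    hφ.memLp_fderiv_apply hφc _
  have lhs := integral_mul_add_mul (hu.integrable_mul hdφ2) (hv.integrable_mul hdφ2) a b
  have rhs := integral_mul_add_mul ((hDu.eval j).integrable_mul hφ2)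
    ((hDv.eval j).integrable_mul hφ2) a b
  simp only [Pi.mul_apply] at lhs rhs
  simp only [Pi.add_apply, Pi.smul_apply, smul_eq_mul, add_mul, mul_assoc, lhs, rhs,
    hweak_u φ hφ hφc hφΩ j, hweak_v φ hφ hφc hφΩ j]
  ring

theorem IsHelmSol.smul_add_smul (hn : Measurable n) {C : ℝ} (hC : ∀ x, |n x| ≤ C)
    (hu : MemLp u 2 (volume.restrict Ω)) (hDu : MemLp Du 2 (volume.restrict Ω))
    (hv : MemLp v 2 (volume.restrict Ω)) (hDv : MemLp Dv 2 (volume.restrict Ω))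
    (hsu : IsHelmSol d k n f Ω u Du) (hsv : IsHelmSol d k n f Ω v Dv) {a b : ℂ} (hab : a + b = 1) :
    IsHelmSol d k n f Ω (a • u + b • v) (a • Du + b • Dv) := by
  intro φ hφ hφc hφΩ
  have hdφ2 : ∀ j, MemLp (fun x => conj (fderiv ℝ φ x (basisE d j))) 2 (volume.restrict Ω) :=
    fun j => (hφ.memLp_fderiv_apply hφc _).star
  have hnφ2 : MemLp (fun x => ((n x : ℝ) : ℂ) ^ 2 * conj (φ x)) 2 (volume.restrict Ω) :=
    (hφ.continuous.memLp_of_hasCompactSupport hφc).star.ofReal_sq_mul hn hC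
  have grad := integral_mul_add_mul
    (integrable_finsetSum Finset.univ fun j _ => (hDu.eval j).integrable_mul (hdφ2 j))
    (integrable_finsetSum Finset.univ fun j _ => (hDv.eval j).integrable_mul (hdφ2 j))
    a b
  simp only [Pi.mul_apply] at grad
  have hpot : ∀ w : Euc d → ℂ, MemLp w 2 (volume.restrict Ω) →
      Integrable (fun x => ((n x : ℝ) : ℂ) ^ 2 * w x * conj (φ x)) (volume.restrict Ω) :=
    fun w hw => (hw.integrable_mul hnφ2).congr
      (Filter.Eventually.of_forall fun x => by simp only [Pi.mul_apply]; ring)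
  have pot := integral_mul_add_mul (hpot u hu) (hpot v hv) a b
  have grad_eq : ∫ x in Ω, ∑ j, (a • Du + b • Dv) x j * conj (fderiv ℝ φ x (basisE d j))
      = ∫ x in Ω, (a * ∑ j, Du x j * conj (fderiv ℝ φ x (basisE d j))
          + b * ∑ j, Dv x j * conj (fderiv ℝ φ x (basisE d j))) := by
    congr 1 with x
    simp only [Pi.add_apply, Pi.smul_apply, smul_eq_mul, Finset.mul_sum, ← Finset.sum_add_distrib]
    exact Finset.sum_congr rfl fun j _ => by ring
  have pot_eq : ∫ x in Ω, ((n x : ℝ) : ℂ) ^ 2 * (a • u + b • v) x * conj (φ x)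
      = ∫ x in Ω, (a * (((n x : ℝ) : ℂ) ^ 2 * u x * conj (φ x))
          + b * (((n x : ℝ) : ℂ) ^ 2 * v x * conj (φ x))) := by
    congr 1 with x
    simp only [Pi.add_apply, Pi.smul_apply, smul_eq_mul]
    ring
  rw [grad_eq, grad, pot_eq, pot]
  linear_combination a * hsu φ hφ hφc hφΩ + b * hsv φ hφ hφc hφΩ
    + (∫ x in Ω, f x * conj (φ x)) * hab

end SolutionSet

theorem sq_helmInf_le {d : ℕ} {k : ℝ} {n : Euc d → ℝ} {f u : Euc d → ℂ} {Du : Euc d → Fin d → ℂ}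
    {R : ℝ} (hu : MemH1 d (ball 0 R) u Du) (hs : IsHelmSol d k n f (ball 0 R) u Du) :
    helmInf d k n f R ^ 2 ≤ radNormSq d k n (ball 0 R) u Du := by
  have hnonneg : ∀ s ∈ {s : ℝ | ∃ u Du, MemH1 d (ball (0 : Euc d) R) u Du ∧
      IsHelmSol d k n f (ball (0 : Euc d) R) u Du ∧
      s = Real.sqrt (radNormSq d k n (ball (0 : Euc d) R) u Du)}, 0 ≤ s := by
    rintro _ ⟨_, _, _, _, rfl⟩
    exact Real.sqrt_nonneg _
  have hle : helmInf d k n f R ≤ Real.sqrt (radNormSq d k n (ball 0 R) u Du) :=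
    csInf_le ⟨0, hnonneg⟩ ⟨u, Du, hu, hs, rfl⟩
  exact (Real.le_sqrt (Real.sInf_nonneg hnonneg) radNormSq_nonneg).1 hle

theorem statement10_general (d : ℕ) (k : ℝ)
    (n : Euc d → ℝ) (hn_meas : Measurable n) (hn_bdd : ∃ C : ℝ, ∀ x, |n x| ≤ C)
    (f : Euc d → ℂ)
    (R ρ : ℝ) (hRρ : R < ρ)
    (uR uρ : Euc d → ℂ) (DuR Duρ : Euc d → Fin d → ℂ)
    (huR : MemH1 d (ball (0 : Euc d) R) uR DuR)
    (huR' : IsHelmSol d k n f (ball (0 : Euc d) R) uR DuR)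
    (huRmin : Real.sqrt (radNormSq d k n (ball (0 : Euc d) R) uR DuR) = helmInf d k n f R)
    (huρ : MemH1 d (ball (0 : Euc d) ρ) uρ Duρ)
    (huρ' : IsHelmSol d k n f (ball (0 : Euc d) ρ) uρ Duρ)
    (huρmin : Real.sqrt (radNormSq d k n (ball (0 : Euc d) ρ) uρ Duρ) = helmInf d k n f ρ) :
    radNormSq d k n (ball (0 : Euc d) R)
        (fun x => uR x - uρ x) (fun x j => DuR x j - Duρ x j)
      ≤ 2 * ((helmInf d k n f ρ) ^ 2 - (helmInf d k n f R) ^ 2) := by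
  obtain ⟨C, hC⟩ := hn_bdd
  have hball : ball (0 : Euc d) R ⊆ ball 0 ρ := ball_subset_ball hRρ.le
  have huρR : MemH1 d (ball 0 R) uρ Duρ := huρ.mono hball
  have hmid := sq_helmInf_le (huR.smul_add_smul huρR (2 : ℂ)⁻¹ (2 : ℂ)⁻¹)
    (huR'.smul_add_smul hn_meas hC huR.1 huR.2.1 huρR.1 huρR.2.1 (huρ'.mono hball) (by norm_num))
  have huR_eq : radNormSq d k n (ball 0 R) uR DuR = helmInf d k n f R ^ 2 := by
    rw [← huRmin, Real.sq_sqrt radNormSq_nonneg]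
  have huρ_le : radNormSq d k n (ball 0 R) uρ Duρ ≤ helmInf d k n f ρ ^ 2 := by
    rw [← huρmin, Real.sq_sqrt radNormSq_nonneg]
    exact radNormSq_mono_set hball hn_meas hC huρ.1 huρ.2.1
  calc radNormSq d k n (ball 0 R) (fun x => uR x - uρ x) (fun x j => DuR x j - Duρ x j)
      = _ := radNormSq_sub hn_meas hC huR.1 huR.2.1 huρR.1 huρR.2.1
    _ ≤ _ := by linarith

/-- For minimizers `u_{B_R}` of `[·]_R` over `D_R` and `u_{B_ρ}` of `[·]_ρ`
over `D_ρ` with `ρ > R > 0`, one has `[u_{B_R} − u_{B_ρ}]_R² ≤ 2 (d_ρ² − d_R²)`. -/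
theorem statement10 (d : ℕ) (hd : 2 ≤ d) (k : ℝ) (hk : 0 < k)
    (n : Euc d → ℝ) (hn_meas : Measurable n) (hn_bdd : ∃ C : ℝ, ∀ x, |n x| ≤ C)
    (f : Euc d → ℂ) (hf : ∀ R > (0 : ℝ), MemLp f 2 (volume.restrict (ball (0 : Euc d) R)))
    (R ρ : ℝ) (hR : 0 < R) (hRρ : R < ρ)
    (uR uρ : Euc d → ℂ) (DuR Duρ : Euc d → Fin d → ℂ)
    (huR : MemH1 d (ball (0 : Euc d) R) uR DuR)
    (huR' : IsHelmSol d k n f (ball (0 : Euc d) R) uR DuR)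
    (huRmin : Real.sqrt (radNormSq d k n (ball (0 : Euc d) R) uR DuR) = helmInf d k n f R)
    (huρ : MemH1 d (ball (0 : Euc d) ρ) uρ Duρ)
    (huρ' : IsHelmSol d k n f (ball (0 : Euc d) ρ) uρ Duρ)
    (huρmin : Real.sqrt (radNormSq d k n (ball (0 : Euc d) ρ) uρ Duρ) = helmInf d k n f ρ) :
    radNormSq d k n (ball (0 : Euc d) R)
        (fun x => uR x - uρ x) (fun x j => DuR x j - Duρ x j)
      ≤ 2 * ((helmInf d k n f ρ) ^ 2 - (helmInf d k n f R) ^ 2) :=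
  statement10_general d k n hn_meas hn_bdd f R ρ hRρ uR uρ DuR Duρ huR huR' huRmin huρ huρ' huρmin
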